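/- The family CF_cb of capacity-bounded context-free languages is closed under Kleene star: if L ∈ CF_cb then L* ∈ CF_cb. Concretely, if L = L(G) for G = (V, Σ, S, R, 𝟏) with capacity 1, then G' = (V ∪ {S'}, Σ, S', R ∪ {S'→SS', S'→λ}, 𝟏) satisfies L(G') = L*. -/

import Mathlib

/-! Common definitions: symbols, context-free grammars, Ginsburg–Spanier phrase
structure grammars, capacity-bounded derivations, matrix/vector grammars,
finite index, cf Petri nets with place capacities, and language families. -/

inductive Symb (N T : Type) where
  | nt : N → Symb N T
  | tm : T → Symb N T
deriving DecidableEq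

namespace CapGram

variable {N T Δ α : Type}

open Classical in
/-- Number of occurrences of the nonterminal `A` in a sentential form. -/
noncomputable def symCount (A : N) : List (Symb N T) → ℕ
  | [] => 0
  | Symb.nt B :: r => (if B = A then 1 else 0) + symCount A r
  | Symb.tm _ :: r => symCount A r

/-- Total number of nonterminal occurrences in a sentential form. -/
def ntCount : List (Symb N T) → ℕ
  | [] => 0
  | Symb.nt _ :: r => 1 + ntCount r
  | Symb.tm _ :: r => ntCount r

/-- The sentential form `w` respects the capacity function `κ`. -/
def CapOK (κ : N → ℕ) (w : List (Symb N T)) : Prop :=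
  ∀ A : N, symCount A w ≤ κ A

/-- A context-free grammar (rules are pairs of a nonterminal and a word). -/
structure CFG (N T : Type) where
  start : N
  rules : Finset (N × List (Symb N T))

/-- Application of a single context-free rule. -/
def applyRule (r : N × List (Symb N T)) (u v : List (Symb N T)) : Prop :=
  ∃ x y : List (Symb N T), u = x ++ Symb.nt r.1 :: y ∧ v = x ++ r.2 ++ y

def CFG.Step (G : CFG N T) (u v : List (Symb N T)) : Prop :=
  ∃ r ∈ G.rules, applyRule r u v

/-- A derivation step both of whose sentential forms respect the capacity. -/
def CFG.CapStep (G : CFG N T) (κ : N → ℕ) (u v : List (Symb N T)) : Prop :=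
  G.Step u v ∧ CapOK κ u ∧ CapOK κ v

/-- A derivation step both of whose sentential forms have at most `k`
nonterminal occurrences in total. -/
def CFG.IdxStep (G : CFG N T) (k : ℕ) (u v : List (Symb N T)) : Prop :=
  G.Step u v ∧ ntCount u ≤ k ∧ ntCount v ≤ k

/-- The (unrestricted) language of a context-free grammar. -/
def CFG.Lang (G : CFG N T) : Set (List T) :=
  { w | Relation.ReflTransGen G.Step [Symb.nt G.start] (w.map Symb.tm) }

/-- The language of the capacity-bounded grammar `(G, κ)`. -/
def CFG.CapLang (G : CFG N T) (κ : N → ℕ) : Set (List T) :=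
  { w | Relation.ReflTransGen (G.CapStep κ) [Symb.nt G.start] (w.map Symb.tm) }

/-- Words with a derivation of index at most `k`. -/
def CFG.FinLang (G : CFG N T) (k : ℕ) : Set (List T) :=
  { w | Relation.ReflTransGen (G.IdxStep k) [Symb.nt G.start] (w.map Symb.tm) }

/-- A phrase structure grammar due to Ginsburg and Spanier: the left-hand side
of a rule is a nonempty word of nonterminals, encoded as head and tail. -/
structure GSG (N T : Type) where
  start : N
  rules : Finset ((N × List N) × List (Symb N T))

def GSG.Step (G : GSG N T) (u v : List (Symb N T)) : Prop :=
  ∃ r ∈ G.rules, ∃ x y : List (Symb N T),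
    u = x ++ (r.1.1 :: r.1.2).map Symb.nt ++ y ∧ v = x ++ r.2 ++ y

def GSG.CapStep (G : GSG N T) (κ : N → ℕ) (u v : List (Symb N T)) : Prop :=
  G.Step u v ∧ CapOK κ u ∧ CapOK κ v

def GSG.Lang (G : GSG N T) : Set (List T) :=
  { w | Relation.ReflTransGen G.Step [Symb.nt G.start] (w.map Symb.tm) }

def GSG.CapLang (G : GSG N T) (κ : N → ℕ) : Set (List T) :=
  { w | Relation.ReflTransGen (G.CapStep κ) [Symb.nt G.start] (w.map Symb.tm) }

/-- Derivations labeled by their sequence of context-free rules, where every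
sentential form (including the first and last) satisfies the invariant `P`. -/
inductive DerivP (P : List (Symb N T) → Prop) :
    List (N × List (Symb N T)) → List (Symb N T) → List (Symb N T) → Prop
  | nil (u : List (Symb N T)) : P u → DerivP P [] u u
  | cons {r π u v w} : P u → applyRule r u v → DerivP P π v w →
      DerivP P (r :: π) u w

/-- A matrix grammar: a finite set of matrices (sequences of cf rules). -/
structure MG (N T : Type) where
  start : N
  mats : Finset (List (N × List (Symb N T)))

/-- Matrix language: rule sequences are concatenations of matrices. -/
def MG.Lang (G : MG N T) : Set (List T) :=
  { w | ∃ ms : List (List (N × List (Symb N T))),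
      (∀ m ∈ ms, m ∈ G.mats) ∧
      DerivP (fun _ => True) ms.flatten [Symb.nt G.start] (w.map Symb.tm) }

/-- Words with a matrix derivation of index at most `k`. -/
def MG.FinLang (G : MG N T) (k : ℕ) : Set (List T) :=
  { w | ∃ ms : List (List (N × List (Symb N T))),
      (∀ m ∈ ms, m ∈ G.mats) ∧
      DerivP (fun u => ntCount u ≤ k) ms.flatten [Symb.nt G.start] (w.map Symb.tm) }

/-- `Shuffle ms π`: `π` is an interleaving (shuffle) of the lists in `ms`. -/
inductive Shuffle : List (List α) → List α → Prop
  | nil (ms : List (List α)) : (∀ l ∈ ms, l = []) → Shuffle ms []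
  | cons {ms₁ : List (List α)} {l : List α} {ms₂ : List (List α)} {π : List α}
      (a : α) : Shuffle (ms₁ ++ l :: ms₂) π →
      Shuffle (ms₁ ++ (a :: l) :: ms₂) (a :: π)

/-- A vector grammar: like a matrix grammar, but derivations use shuffles. -/
structure VG (N T : Type) where
  start : N
  mats : Finset (List (N × List (Symb N T)))

def VG.Lang (G : VG N T) : Set (List T) :=
  { w | ∃ ms π, (∀ m ∈ ms, m ∈ G.mats) ∧ Shuffle ms π ∧
      DerivP (fun _ => True) π [Symb.nt G.start] (w.map Symb.tm) }

def VG.CapLang (G : VG N T) (κ : N → ℕ) : Set (List T) :=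
  { w | ∃ ms π, (∀ m ∈ ms, m ∈ G.mats) ∧ Shuffle ms π ∧
      DerivP (CapOK κ) π [Symb.nt G.start] (w.map Symb.tm) }

def VG.FinLang (G : VG N T) (k : ℕ) : Set (List T) :=
  { w | ∃ ms π, (∀ m ∈ ms, m ∈ G.mats) ∧ Shuffle ms π ∧
      DerivP (fun u => ntCount u ≤ k) π [Symb.nt G.start] (w.map Symb.tm) }

/-! cf Petri nets: places are in bijection with the nonterminals, transitions
with the rules; firing the transition of rule `A → α` consumes one token from
the place of `A` and adds `|α|_X` tokens to the place of each nonterminal `X`. -/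

open Classical in
/-- Firing of the transition corresponding to rule `r`, turning marking `μ`
into marking `μ'`. -/
noncomputable def ruleFire (r : N × List (Symb N T)) (μ μ' : N → ℕ) : Prop :=
  1 ≤ μ r.1 ∧ ∀ A, μ' A = μ A - (if A = r.1 then 1 else 0) + symCount A r.2

/-- Occurrence sequences of the cf Petri net of `G`, all of whose markings
(including initial and final) satisfy the validity predicate `P`. -/
inductive FireSeqP (G : CFG N T) (P : (N → ℕ) → Prop) :
    List (N × List (Symb N T)) → (N → ℕ) → (N → ℕ) → Prop
  | nil (μ : N → ℕ) : P μ → FireSeqP G P [] μ μ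
  | cons {r π μ μ' μ''} : r ∈ G.rules → P μ → ruleFire r μ μ' →
      FireSeqP G P π μ' μ'' → FireSeqP G P (r :: π) μ μ''

open Classical in
/-- The initial marking: one token on the place of the start symbol. -/
noncomputable def initMark (G : CFG N T) : N → ℕ :=
  fun A => if A = G.start then 1 else 0

/-- The language of `G` controlled by its cf Petri net restricted to markings
satisfying `P` (e.g. a place capacity constraint). -/
def CFG.PNLang (G : CFG N T) (P : (N → ℕ) → Prop) : Set (List T) :=
  { w | ∃ π μ, DerivP (fun _ => True) π [Symb.nt G.start] (w.map Symb.tm) ∧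
      FireSeqP G P π (initMark G) μ }

/-! Language families over a terminal alphabet `T`. -/

/-- Context-free languages of finite index. -/
def CFfin (T : Type) : Set (Set (List T)) :=
  { L | ∃ (N : Type) (_ : Fintype N) (G : CFG N T) (k : ℕ),
      L = G.Lang ∧ G.Lang ⊆ G.FinLang k }

/-- Languages of capacity-bounded context-free grammars. -/
def CFcb (T : Type) : Set (Set (List T)) :=
  { L | ∃ (N : Type) (_ : Fintype N) (G : CFG N T) (κ : N → ℕ),
      L = G.CapLang κ }

/-- Languages of capacity-bounded Ginsburg–Spanier phrase structure grammars. -/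
def GScb (T : Type) : Set (Set (List T)) :=
  { L | ∃ (N : Type) (_ : Fintype N) (G : GSG N T) (κ : N → ℕ),
      L = G.CapLang κ }

/-- Matrix languages of finite index. -/
def MATfin (T : Type) : Set (Set (List T)) :=
  { L | ∃ (N : Type) (_ : Fintype N) (G : MG N T) (k : ℕ),
      L = G.Lang ∧ G.Lang ⊆ G.FinLang k }

/-- Capacity-bounded vector languages (erasing rules allowed). -/
def Vcb (T : Type) : Set (Set (List T)) :=
  { L | ∃ (N : Type) (_ : Fintype N) (G : VG N T) (κ : N → ℕ),
      L = G.CapLang κ }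

/-- Vector languages of finite index (erasing rules allowed). -/
def Vfin (T : Type) : Set (Set (List T)) :=
  { L | ∃ (N : Type) (_ : Fintype N) (G : VG N T) (k : ℕ),
      L = G.Lang ∧ G.Lang ⊆ G.FinLang k }

/-- Languages of grammars controlled by cf Petri nets with place capacities. -/
def PNcap (T : Type) : Set (Set (List T)) :=
  { L | ∃ (N : Type) (_ : Fintype N) (G : CFG N T) (κ : N → ℕ),
      L = G.PNLang (fun μ => ∀ A, μ A ≤ κ A) }


/-- Relabeling of symbols for the Kleene star construction. -/
def relabelSym : Symb N T → Symb (N ⊕ Unit) T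
  | .nt A => .nt (Sum.inl A)
  | .tm a => .tm a

/-- The Kleene star construction: add a fresh start symbol `S' = Sum.inr ()`
and the rules `S' → S S'` and `S' → λ`. -/
def kleeneExt [DecidableEq N] [DecidableEq T] (G : CFG N T) : CFG (N ⊕ Unit) T where
  start := Sum.inr ()
  rules :=
    (G.rules.image (fun r => (Sum.inl r.1, r.2.map relabelSym))) ∪
    {(Sum.inr (), [Symb.nt (Sum.inl G.start), Symb.nt (Sum.inr ())]),
     (Sum.inr (), ([] : List (Symb (N ⊕ Unit) T)))}

/-- Kleene closure of a language. -/
def KStar (L : Set (List T)) : Set (List T) :=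
  { w | ∃ ws : List (List T), (∀ u ∈ ws, u ∈ L) ∧ w = ws.flatten }

/-! ### Auxiliary lemmas for the Kleene star theorem -/

section KStarAux

lemma symCount_nil (A : N) : symCount A ([] : List (Symb N T)) = 0 := rfl

open Classical in
lemma symCount_cons_nt (A B : N) (r : List (Symb N T)) :
    symCount A (Symb.nt B :: r) = (if B = A then 1 else 0) + symCount A r := rfl

lemma symCount_cons_tm (A : N) (a : T) (r : List (Symb N T)) :
    symCount A (Symb.tm a :: r) = symCount A r := rfl

lemma symCount_append (A : N) (u v : List (Symb N T)) :
    symCount A (u ++ v) = symCount A u + symCount A v := by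
  induction u with
  | nil => simp [symCount_nil]
  | cons s r ih =>
    cases s <;> simp [symCount_cons_nt, symCount_cons_tm, ih, Nat.add_assoc]

lemma symCount_tm (A : N) (w : List T) :
    symCount A ((w.map Symb.tm : List (Symb N T))) = 0 := by
  induction w with
  | nil => rfl
  | cons a r ih => simpa [symCount_cons_tm] using ih

lemma relabelSym_injective : Function.Injective (relabelSym (N := N) (T := T)) := by
  intro a b h
  cases a <;> cases b <;> simp [relabelSym] at h <;> simp [h]

lemma symCount_relabel_inl (A : N) (u : List (Symb N T)) :
    symCount (Sum.inl A) (u.map relabelSym) = symCount A u := by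
  induction u with
  | nil => rfl
  | cons s r ih =>
    cases s with
    | nt B =>
      by_cases h : B = A <;> simp [relabelSym, symCount_cons_nt, ih, h]
    | tm a => simpa [relabelSym, symCount_cons_tm] using ih

lemma symCount_relabel_inr (b : Unit) (u : List (Symb N T)) :
    symCount (Sum.inr b) (u.map relabelSym) = 0 := by
  induction u with
  | nil => rfl
  | cons s r ih =>
    cases s with
    | nt B => simpa [relabelSym, symCount_cons_nt] using ih
    | tm a => simpa [relabelSym, symCount_cons_tm] using ih

lemma CapOK_append_left {κ : N → ℕ} {u v : List (Symb N T)}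
    (h : CapOK κ (u ++ v)) : CapOK κ u := by
  intro A
  have := h A
  rw [symCount_append] at this
  omega

lemma CapOK_append_right {κ : N → ℕ} {u v : List (Symb N T)}
    (h : CapOK κ (u ++ v)) : CapOK κ v := by
  intro A
  have := h A
  rw [symCount_append] at this
  omega

lemma CapOK_relabel {κ : N → ℕ} {κ' : N ⊕ Unit → ℕ}
    (hinl : ∀ A, κ' (Sum.inl A) = κ A) {u : List (Symb N T)}
    (h : CapOK κ' (u.map relabelSym)) : CapOK κ u := by
  intro A
  have := h (Sum.inl A)
  rwa [symCount_relabel_inl, hinl] at this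

lemma relabel_map_tm (w : List T) :
    ((w.map Symb.tm : List (Symb N T)).map relabelSym) = w.map Symb.tm := by
  induction w with
  | nil => rfl
  | cons a r ih => simp [relabelSym, ih]

lemma map_relabel_eq_tm {z : List (Symb N T)} {w : List T}
    (h : z.map relabelSym = w.map Symb.tm) : z = w.map Symb.tm := by
  apply List.map_injective_iff.mpr relabelSym_injective
  rw [h, relabel_map_tm]

/-- The singleton with `S'` is not an image of `relabelSym`. -/
lemma not_inr_mem_relabel {z : List (Symb N T)}
    (h : (Symb.nt (Sum.inr ()) : Symb (N ⊕ Unit) T) ∈ z.map relabelSym) : False := by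
  rcases List.mem_map.1 h with ⟨s, _, hs⟩
  cases s <;> simp [relabelSym] at hs

/-- Splitting a capacity-bounded derivation at a concatenation point. -/
lemma split_deriv {G : CFG N T} {κ : N → ℕ} {w : List T} :
    ∀ {s u v : List (Symb N T)},
      Relation.ReflTransGen (G.CapStep κ) s (w.map Symb.tm) →
      s = u ++ v →
      ∃ w₁ w₂, w = w₁ ++ w₂ ∧
        Relation.ReflTransGen (G.CapStep κ) u (w₁.map Symb.tm) ∧
        Relation.ReflTransGen (G.CapStep κ) v (w₂.map Symb.tm) := by
  intro s u v h
  induction h using Relation.ReflTransGen.head_induction_on generalizing u v with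
  | refl =>
    intro hs
    rcases List.map_eq_append_iff.1 hs with ⟨w₁, w₂, hw, hu, hv⟩
    exact ⟨w₁, w₂, hw, by rw [hu], by rw [hv]⟩
  | @head a c hstep hrest ih =>
    intro hs
    obtain ⟨⟨r, hr, x, y, hxy, hc⟩, capa, capc⟩ := hstep
    subst hs
    rcases List.append_eq_append_iff.1 hxy with ⟨a', hx, hv⟩ | ⟨c', hu, hy⟩
    · -- occurrence inside v
      have hcdec : c = u ++ (a' ++ r.2 ++ y) := by
        rw [hc, hx]; simp [List.append_assoc]
      rcases ih hcdec with ⟨w₁, w₂, hw, h₁, h₂⟩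
      refine ⟨w₁, w₂, hw, h₁, Relation.ReflTransGen.head ?_ h₂⟩
      refine ⟨⟨r, hr, a', y, hv, rfl⟩, ?_, ?_⟩
      · exact CapOK_append_right capa
      · exact CapOK_append_right (hcdec ▸ capc)
    · -- occurrence inside u, or at the boundary
      cases c' with
      | nil =>
        -- u = x, v = nt r.1 :: y : occurrence in v
        simp only [List.append_nil] at hu
        have hcdec : c = u ++ (r.2 ++ y) := by
          rw [hc, hu]; simp [List.append_assoc]
        rcases ih hcdec with ⟨w₁, w₂, hw, h₁, h₂⟩
        refine ⟨w₁, w₂, hw, h₁, Relation.ReflTransGen.head ?_ h₂⟩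
        refine ⟨⟨r, hr, [], y, by simpa using hy.symm, rfl⟩, ?_, ?_⟩
        · exact CapOK_append_right capa
        · exact CapOK_append_right (hcdec ▸ capc)
      | cons s₀ c'' =>
        obtain ⟨hs₀, hy'⟩ : s₀ = Symb.nt r.1 ∧ y = c'' ++ v := by
          injection hy with h1 h2; exact ⟨h1.symm, h2⟩
        subst hs₀
        have hcdec : c = (x ++ r.2 ++ c'') ++ v := by
          rw [hc, hy']; simp [List.append_assoc]
        rcases ih hcdec with ⟨w₁, w₂, hw, h₁, h₂⟩
        refine ⟨w₁, w₂, hw, Relation.ReflTransGen.head ?_ h₁, h₂⟩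
        refine ⟨⟨r, hr, x, c'', hu, rfl⟩, ?_, ?_⟩
        · exact CapOK_append_left capa
        · exact CapOK_append_left (hcdec ▸ capc)

lemma CapOK_prepend_tm {κ : N → ℕ} (t : List T) {u : List (Symb N T)}
    (h : CapOK κ u) : CapOK κ (t.map Symb.tm ++ u) := by
  intro A
  rw [symCount_append, symCount_tm]
  simpa using h A

lemma rtg_prepend_tm {G : CFG N T} {κ : N → ℕ} (t : List T) {u v : List (Symb N T)}
    (h : Relation.ReflTransGen (G.CapStep κ) u v) :
    Relation.ReflTransGen (G.CapStep κ) (t.map Symb.tm ++ u) (t.map Symb.tm ++ v) := by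
  refine Relation.ReflTransGen.lift (fun l => t.map Symb.tm ++ l) ?_ _ _ h
  rintro a b ⟨⟨r, hr, x, y, hx, hy⟩, c1, c2⟩
  exact ⟨⟨r, hr, t.map Symb.tm ++ x, y, by simp [hx], by simp [hy]⟩,
    CapOK_prepend_tm t c1, CapOK_prepend_tm t c2⟩

lemma mem_kleene_rules [DecidableEq N] [DecidableEq T] {G : CFG N T}
    {r' : (N ⊕ Unit) × List (Symb (N ⊕ Unit) T)} (h : r' ∈ (kleeneExt G).rules) :
    (∃ r ∈ G.rules, r' = (Sum.inl r.1, r.2.map relabelSym)) ∨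
    r' = (Sum.inr (), [Symb.nt (Sum.inl G.start), Symb.nt (Sum.inr ())]) ∨
    r' = (Sum.inr (), ([] : List (Symb (N ⊕ Unit) T))) := by
  rcases Finset.mem_union.1 h with h | h
  · rcases Finset.mem_image.1 h with ⟨r, hr, hr'⟩
    exact Or.inl ⟨r, hr, hr'.symm⟩
  · rcases Finset.mem_insert.1 h with h | h
    · exact Or.inr (Or.inl h)
    · exact Or.inr (Or.inr (Finset.mem_singleton.1 h))

lemma relabel_split_nt {z : List (Symb N T)} {x y : List (Symb (N ⊕ Unit) T)} {A : N}
    (h : z.map relabelSym = x ++ Symb.nt (Sum.inl A) :: y) :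
    ∃ x₀ y₀, z = x₀ ++ Symb.nt A :: y₀ ∧
      x = x₀.map relabelSym ∧ y = y₀.map relabelSym := by
  rcases List.map_eq_append_iff.1 h with ⟨x₀, z₂, hz, hx, hz₂⟩
  cases z₂ with
  | nil => simp at hz₂
  | cons s z₃ =>
    simp only [List.map_cons] at hz₂
    have h1 : relabelSym s = Symb.nt (Sum.inl A) := (List.cons.injEq _ _ _ _ ▸ hz₂).1
    have h2 : y = z₃.map relabelSym := ((List.cons.injEq _ _ _ _ ▸ hz₂).2).symm
    cases s with
    | nt B =>
      have hBA : B = A := by simpa [relabelSym] using h1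
      subst hBA
      exact ⟨x₀, z₃, by simp [hz], hx.symm, h2⟩
    | tm a => simp [relabelSym] at h1

lemma split_at_inr {z : List (Symb N T)} {x y : List (Symb (N ⊕ Unit) T)}
    (h : z.map relabelSym ++ [Symb.nt (Sum.inr ())] =
      x ++ Symb.nt (Sum.inr ()) :: y) :
    x = z.map relabelSym ∧ y = [] := by
  rcases List.append_eq_append_iff.1 h with ⟨a', h1, h2⟩ | ⟨c', h1, h2⟩
  · cases a' with
    | nil =>
      simp only [List.append_nil] at h1
      have := (List.cons.injEq _ _ _ _ ▸ h2)
      exact ⟨h1, this.2.symm⟩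
    | cons s₀ a'' => simp at h2
  · cases c' with
    | nil =>
      simp only [List.append_nil] at h1
      have := (List.cons.injEq _ _ _ _ ▸ h2)
      exact ⟨h1.symm, this.2⟩
    | cons s₀ c'' =>
      exfalso
      have hs₀ : s₀ = Symb.nt (Sum.inr ()) := ((List.cons.injEq _ _ _ _ ▸ h2).1).symm
      apply not_inr_mem_relabel (z := z)
      rw [h1, hs₀]
      exact List.mem_append.2 (Or.inr (List.mem_cons_self))

lemma noInr_deriv [DecidableEq N] [DecidableEq T] {G : CFG N T} {κ : N → ℕ}
    {κ' : N ⊕ Unit → ℕ} (hinl : ∀ A, κ' (Sum.inl A) = κ A) {w : List T}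
    {s : List (Symb (N ⊕ Unit) T)}
    (h : Relation.ReflTransGen ((kleeneExt G).CapStep κ') s
      (w.map Symb.tm)) :
    ∀ {z : List (Symb N T)}, s = z.map relabelSym →
      Relation.ReflTransGen (G.CapStep κ) z (w.map Symb.tm) := by
  induction h using Relation.ReflTransGen.head_induction_on with
  | refl =>
    intro z hz
    rw [map_relabel_eq_tm hz.symm]
  | head hstep hrest ih =>
    intro z hz
    obtain ⟨⟨r', hr', x, y, hxy, hc⟩, capa, capc⟩ := hstep
    subst hz
    rcases mem_kleene_rules hr' with ⟨r, hr, rfl⟩ | rfl | rfl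
    · simp only at hxy hc
      rcases relabel_split_nt hxy with ⟨x₀, y₀, hz, hx, hy⟩
      have hcap2 : CapOK κ' ((x₀ ++ r.2 ++ y₀).map relabelSym) := by
        rw [List.map_append, List.map_append, ← hx, ← hy, ← hc]
        exact capc
      refine Relation.ReflTransGen.head ?_
        (ih (z := x₀ ++ r.2 ++ y₀) (by rw [hc, hx, hy]; simp))
      exact ⟨⟨r, hr, x₀, y₀, hz, rfl⟩, CapOK_relabel hinl capa,
        CapOK_relabel hinl hcap2⟩
    · exact absurd (hxy ▸ List.mem_append.2
        (Or.inr (List.mem_cons_self))) (fun hm => not_inr_mem_relabel hm)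
    · exact absurd (hxy ▸ List.mem_append.2
        (Or.inr (List.mem_cons_self))) (fun hm => not_inr_mem_relabel hm)

/-- Main lemma for the ⊆ direction. -/
lemma main_sub [DecidableEq N] [DecidableEq T] {G : CFG N T} {κ : N → ℕ}
    {κ' : N ⊕ Unit → ℕ} (hinl : ∀ A, κ' (Sum.inl A) = κ A) {w : List T}
    {s : List (Symb (N ⊕ Unit) T)}
    (h : Relation.ReflTransGen ((kleeneExt G).CapStep κ') s (w.map Symb.tm)) :
    ∀ {z : List (Symb N T)}, s = z.map relabelSym ++ [Symb.nt (Sum.inr ())] →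
      ∃ (w₀ : List T) (ws : List (List T)), w = w₀ ++ ws.flatten ∧
        Relation.ReflTransGen (G.CapStep κ) z (w₀.map Symb.tm) ∧
        ∀ u ∈ ws, u ∈ G.CapLang κ := by
  induction h using Relation.ReflTransGen.head_induction_on with
  | refl =>
    intro z hz
    exfalso
    have hm : (Symb.nt (Sum.inr ()) : Symb (N ⊕ Unit) T) ∈ w.map Symb.tm := by
      rw [hz]; exact List.mem_append.2 (Or.inr (List.mem_cons_self))
    rcases List.mem_map.1 hm with ⟨a, _, ha⟩
    simp at ha
  | @head a c hstep hrest ih =>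
    intro z hz
    obtain ⟨⟨r', hr', x, y, hxy, hc⟩, capa, capc⟩ := hstep
    subst hz
    rcases mem_kleene_rules hr' with ⟨r, hr, rfl⟩ | rfl | rfl
    · -- a relabeled rule of G : the occurrence lies inside `z.map relabelSym`
      simp only at hxy hc
      rcases List.append_eq_append_iff.1 hxy with ⟨a', h1, h2⟩ | ⟨c', h1, h2⟩
      · exfalso
        cases a' with
        | nil => simp at h2
        | cons s₀ a'' => simp at h2
      · cases c' with
        | nil => simp at h2
        | cons s₀ c'' =>
          have hs₀ : s₀ = Symb.nt (Sum.inl r.1) :=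
            ((List.cons.injEq _ _ _ _ ▸ h2).1).symm
          have hy : y = c'' ++ [Symb.nt (Sum.inr ())] :=
            (List.cons.injEq _ _ _ _ ▸ h2).2
          subst hs₀
          rcases relabel_split_nt h1 with ⟨x₀, y₀, hzdec, hx, hc''⟩
          have hceq : c = (x₀ ++ r.2 ++ y₀).map relabelSym ++
              [Symb.nt (Sum.inr ())] := by
            rw [hc, hx, hy, hc'']; simp
          rcases ih hceq with ⟨w₀, ws, hw, hder, hws⟩
          refine ⟨w₀, ws, hw, Relation.ReflTransGen.head ?_ hder, hws⟩
          refine ⟨⟨r, hr, x₀, y₀, hzdec, rfl⟩, ?_, ?_⟩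
          · exact CapOK_relabel hinl (CapOK_append_left capa)
          · refine CapOK_relabel hinl (CapOK_append_left (v := [Symb.nt (Sum.inr ())]) ?_)
            rw [← hceq]; exact capc
    · -- the rule S' → S S'
      obtain ⟨hx, hy⟩ := split_at_inr hxy
      subst hx; subst hy
      have hceq : c = (z ++ [Symb.nt G.start]).map relabelSym ++
          [Symb.nt (Sum.inr ())] := by
        rw [hc]; simp [relabelSym]
      rcases ih hceq with ⟨w₀, ws, hw, hder, hws⟩
      rcases split_deriv hder rfl with ⟨w₁, w₂, hw0, hd1, hd2⟩
      refine ⟨w₁, w₂ :: ws, ?_, hd1, ?_⟩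
      · rw [hw, hw0]; simp
      · intro u hu
        rcases List.mem_cons.1 hu with rfl | hu
        · exact hd2
        · exact hws u hu
    · -- the rule S' → λ
      obtain ⟨hx, hy⟩ := split_at_inr hxy
      subst hx; subst hy
      have hceq : c = z.map relabelSym := by rw [hc]; simp
      exact ⟨w, [], by simp, noInr_deriv hinl hrest hceq, by simp⟩

lemma CapOK_relabel_append_inr {κ : N → ℕ} {κ' : N ⊕ Unit → ℕ}
    (hinl : ∀ A, κ' (Sum.inl A) = κ A) (hinr : 1 ≤ κ' (Sum.inr ()))
    {u : List (Symb N T)} (h : CapOK κ u) :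
    CapOK κ' (u.map relabelSym ++ [Symb.nt (Sum.inr ())]) := by
  intro A
  rw [symCount_append]
  cases A with
  | inl B =>
    rw [symCount_relabel_inl, hinl]
    have h1 : symCount (Sum.inl B) [(Symb.nt (Sum.inr ()) : Symb (N ⊕ Unit) T)] = 0 := by
      simp [symCount_cons_nt, symCount_nil]
    have := h B
    omega
  | inr b =>
    rw [symCount_relabel_inr]
    have h1 : symCount (Sum.inr b) [(Symb.nt (Sum.inr ()) : Symb (N ⊕ Unit) T)] = 1 := by
      cases b; simp [symCount_cons_nt, symCount_nil]
    have h2 : 1 ≤ κ' (Sum.inr b) := by cases b; exact hinr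
    omega

lemma rtg_relabel [DecidableEq N] [DecidableEq T] {G : CFG N T} {κ : N → ℕ}
    {κ' : N ⊕ Unit → ℕ} (hinl : ∀ A, κ' (Sum.inl A) = κ A)
    (hinr : 1 ≤ κ' (Sum.inr ())) {u v : List (Symb N T)}
    (h : Relation.ReflTransGen (G.CapStep κ) u v) :
    Relation.ReflTransGen ((kleeneExt G).CapStep κ')
      (u.map relabelSym ++ [Symb.nt (Sum.inr ())])
      (v.map relabelSym ++ [Symb.nt (Sum.inr ())]) := by
  refine Relation.ReflTransGen.lift
    (fun (l : List (Symb N T)) => l.map relabelSym ++ [Symb.nt (Sum.inr ())]) ?_ _ _ h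
  rintro a b ⟨⟨r, hr, x, y, hx, hy⟩, c1, c2⟩
  refine ⟨⟨(Sum.inl r.1, r.2.map relabelSym),
      Finset.mem_union_left _ (Finset.mem_image_of_mem _ hr),
      x.map relabelSym, y.map relabelSym ++ [Symb.nt (Sum.inr ())],
      by rw [hx]; simp [relabelSym], by rw [hy]; simp⟩,
    CapOK_relabel_append_inr hinl hinr c1, CapOK_relabel_append_inr hinl hinr c2⟩

lemma capLang_start_le {G : CFG N T} {κ : N → ℕ} {u : List T}
    (hu : u ∈ G.CapLang κ) : 1 ≤ κ G.start := by
  rcases Relation.ReflTransGen.cases_head hu with heq | ⟨c, hstep, _⟩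
  · exfalso; cases u <;> simp at heq
  · have := hstep.2.1 G.start
    simpa [symCount_cons_nt, symCount_nil] using this

/-- Main lemma for the ⊇ direction. -/
lemma main_sup [DecidableEq N] [DecidableEq T] {G : CFG N T} {κ : N → ℕ}
    {κ' : N ⊕ Unit → ℕ} (hinl : ∀ A, κ' (Sum.inl A) = κ A)
    (hinr : 1 ≤ κ' (Sum.inr ())) :
    ∀ (ws : List (List T)), (∀ u ∈ ws, u ∈ G.CapLang κ) →
      Relation.ReflTransGen ((kleeneExt G).CapStep κ') [Symb.nt (Sum.inr ())]
        ((ws.flatten).map Symb.tm) := by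
  have capS' : CapOK κ' [(Symb.nt (Sum.inr ()) : Symb (N ⊕ Unit) T)] := by
    intro A
    cases A with
    | inl B => simp [symCount_cons_nt, symCount_nil]
    | inr b => cases b; simpa [symCount_cons_nt, symCount_nil] using hinr
  intro ws
  induction ws with
  | nil =>
    intro _
    refine Relation.ReflTransGen.single ?_
    refine ⟨⟨(Sum.inr (), []), ?_, [], [], rfl, rfl⟩, capS', ?_⟩
    · exact Finset.mem_union_right _
        (Finset.mem_insert_of_mem (Finset.mem_singleton_self _))
    · intro A; simp [symCount_nil]
  | cons u ws ihw =>
    intro hws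
    have hu : u ∈ G.CapLang κ := hws u (List.mem_cons_self)
    have hκs : 1 ≤ κ G.start := capLang_start_le hu
    have step1 : (kleeneExt G).CapStep κ' [Symb.nt (Sum.inr ())]
        [Symb.nt (Sum.inl G.start), Symb.nt (Sum.inr ())] := by
      refine ⟨⟨(Sum.inr (), [Symb.nt (Sum.inl G.start), Symb.nt (Sum.inr ())]),
        ?_, [], [], rfl, rfl⟩, capS', ?_⟩
      · exact Finset.mem_union_right _ (Finset.mem_insert_self _ _)
      · intro A
        cases A with
        | inl B =>
          by_cases hB : B = G.start
          · subst hB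
            simpa [symCount_cons_nt, symCount_nil, hinl] using hκs
          · simp [symCount_cons_nt, symCount_nil, Ne.symm hB, hB]
        | inr b => cases b; simpa [symCount_cons_nt, symCount_nil] using hinr
    have emb : Relation.ReflTransGen ((kleeneExt G).CapStep κ')
        [Symb.nt (Sum.inl G.start), Symb.nt (Sum.inr ())]
        (u.map Symb.tm ++ [Symb.nt (Sum.inr ())]) := by
      have := rtg_relabel hinl hinr hu
      rw [relabel_map_tm] at this
      simpa [relabelSym] using this
    have tail : Relation.ReflTransGen ((kleeneExt G).CapStep κ')
        (u.map Symb.tm ++ [Symb.nt (Sum.inr ())])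
        (u.map Symb.tm ++ (ws.flatten).map Symb.tm) := by
      refine Relation.ReflTransGen.lift (fun l => u.map Symb.tm ++ l) ?_
        _ _ (ihw (fun v hv => hws v (List.mem_cons_of_mem _ hv)))
      rintro a b ⟨⟨r, hr, x, y, hx, hy⟩, c1, c2⟩
      exact ⟨⟨r, hr, u.map Symb.tm ++ x, y, by rw [hx]; simp, by rw [hy]; simp⟩,
        CapOK_prepend_tm u c1, CapOK_prepend_tm u c2⟩
    have hall : Relation.ReflTransGen ((kleeneExt G).CapStep κ') [Symb.nt (Sum.inr ())]
        (u.map Symb.tm ++ (ws.flatten).map Symb.tm) :=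
      ((Relation.ReflTransGen.single step1).trans emb).trans tail
    simpa using hall

lemma kleene_capLang [DecidableEq N] [DecidableEq T] (G : CFG N T) (κ : N → ℕ)
    (κ' : N ⊕ Unit → ℕ) (hinl : ∀ A, κ' (Sum.inl A) = κ A)
    (hinr : 1 ≤ κ' (Sum.inr ())) :
    (kleeneExt G).CapLang κ' = KStar (G.CapLang κ) := by
  ext w
  constructor
  · intro hw
    have hstart : [(Symb.nt (Sum.inr ()) : Symb (N ⊕ Unit) T)] =
        ([] : List (Symb N T)).map relabelSym ++ [Symb.nt (Sum.inr ())] := rfl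
    rcases main_sub hinl hw hstart with ⟨w₀, ws, hw', h0, hws⟩
    have hw₀ : w₀ = [] := by
      rcases Relation.ReflTransGen.cases_head h0 with heq | ⟨c, ⟨⟨r, _, x, y, hx, _⟩, _⟩, _⟩
      · cases w₀ with
        | nil => rfl
        | cons a l => exfalso; simp at heq
      · exact absurd hx (by simp)
    exact ⟨ws, hws, by simp [hw', hw₀]⟩
  · rintro ⟨ws, hws, rfl⟩
    exact main_sup hinl hinr ws hws

end KStarAux

/-- CF_cb is closed under Kleene star; concretely, the grammar
G' = (V ∪ {S'}, Σ, S', R ∪ {S'→SS', S'→λ}, 𝟏) generates L(G)*. -/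
theorem CFcb_closed_kstar :
    (∀ (T : Type) (L : Set (List T)), L ∈ CFcb T → KStar L ∈ CFcb T) ∧
    ∀ (N T : Type) [DecidableEq N] [DecidableEq T] (G : CFG N T),
      CFG.CapLang (kleeneExt G) (fun _ => 1) = KStar (G.CapLang (fun _ => 1)) := by
  constructor
  · rintro T L ⟨N, instN, G, κ, rfl⟩
    classical
    exact ⟨N ⊕ Unit, inferInstance, kleeneExt G, Sum.elim κ (fun _ => 1),
      (kleene_capLang G κ _ (fun _ => rfl) le_rfl).symm⟩
  · intro N T _ _ G
    exact kleene_capLang G (fun _ => 1) (fun _ => 1) (fun _ => rfl) le_rfl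

end CapGram
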